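/- arXiv:2209.10202 — 2 statements merged into one kernel-verified Lean document; each statement's English description precedes it below -/
import Mathlib

section
/- Let H be a real Hilbert space, Q ⊆ H a nonempty closed convex set, ν > 0, A : Q → H a ν-inverse strongly monotone operator, S : Q → Q a nonexpansive mapping, f : Q → Q a contraction with coefficient ρ ∈ [0,1), and let 0 < a < b < 2ν and λ : (0,1] → [a,b]. Assume Ω = Fix(S) ∩ S_VI(A,Q) is nonempty, and for each t ∈ (0,1] let x_t ∈ Q be the unique point satisfying x_t = t·f(x_t) + (1 − t)·S(P_Q(x_t − λ(t)·A x_t)). Then x_t converges strongly in H, as t → 0⁺, to q*, the unique solution of the variational problem: q* ∈ Ω and ⟨f(q*) − q*, x − q*⟩ ≤ 0 for all x ∈ Ω. -/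
/-!
For `q ∈ Ω` the map `T_λ = S ∘ P_Q ∘ (I - λA)` fixes `q` and is nonexpansive for
`0 ≤ λ ≤ 2ν`, so the defining equation gives `‖x_t - q‖² ≤ ⟪f x_t - q, x_t - q⟫`, hence
`(1 - ρ) ‖x_t - q‖² ≤ ⟪f q - q, x_t - q⟫` and the path is bounded. Along any ultrafilter finer than
`t → 0⁺`, `x_t` has a weak limit `z` and `λ(t)` a limit `μ ∈ [a, b]`. Since `‖x_t - T_μ x_t‖ → 0`,
demiclosedness gives `T_μ z = z`, which forces `z ∈ Ω` because `0 < μ < 2ν`. The inequality with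
`q = z` upgrades weak to strong convergence, and passing to the limit in
`⟪f x_t - x_t, q - x_t⟫ ≤ 0` shows that `z` solves the variational inequality on `Ω`, whose solution
is unique because `f` is a contraction. So every such ultrafilter has the same limit.
-/

open scoped RealInnerProductSpace
open Filter Set Topology Function

theorem Filter.exists_tendsto_of_forall_ultrafilter {X Y : Type*} [TopologicalSpace Y]
    {l : Filter X} [NeBot l] {x : X → Y} {p : Y → Prop} (hp : ∀ y z, p y → p z → y = z)
    (h : ∀ U : Ultrafilter X, (U : Filter X) ≤ l → ∃ z, p z ∧ Tendsto x U (𝓝 z)) :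
    ∃ q, p q ∧ Tendsto x l (𝓝 q) := by
  obtain ⟨q, hq, -⟩ := h (Ultrafilter.of l) (Ultrafilter.of_le l)
  refine ⟨q, hq, (tendsto_iff_ultrafilter _ _ _).2 fun U hU => ?_⟩
  obtain ⟨z, hz, hzlim⟩ := h U hU
  rwa [hp z q hz hq] at hzlim

section WeakConvergence

variable {α H : Type*} [NormedAddCommGroup H] [InnerProductSpace ℝ H]

def TendstoWeakly (l : Filter α) (y : α → H) (z : H) : Prop :=
  ∀ w, Tendsto (fun n => ⟪y n, w⟫) l (𝓝 ⟪z, w⟫)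

theorem TendstoWeakly.tendsto_inner_sub {l : Filter α} {y : α → H} {z : H}
    (h : TendstoWeakly l y z) (w : H) : Tendsto (fun n => ⟪w, y n - z⟫) l (𝓝 0) := by
  simpa [inner_sub_right, real_inner_comm w] using (h w).sub_const ⟪z, w⟫

theorem Ultrafilter.exists_tendsto_of_isCompact {X : Type*} [TopologicalSpace X]
    (U : Ultrafilter α) {g : α → X} {s : Set X} (hs : IsCompact s)
    (h : ∀ᶠ n in (U : Filter α), g n ∈ s) : ∃ r ∈ s, Tendsto g U (𝓝 r) :=
  hs.ultrafilter_le_nhds (U.map g) (by rw [Ultrafilter.coe_map]; exact le_principal_iff.mpr h)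

/-- The weak limit is the Riesz representative of the bounded functional `w ↦ lim ⟪y n, w⟫`. -/
theorem Ultrafilter.exists_tendstoWeakly [CompleteSpace H] (U : Ultrafilter α) {y : α → H}
    {C : ℝ} (hC : ∀ᶠ n in (U : Filter α), ‖y n‖ ≤ C) : ∃ z, TendstoWeakly (U : Filter α) y z := by
  have hlim : ∀ w : H, ∃ r ∈ Icc (-(C * ‖w‖)) (C * ‖w‖),
      Tendsto (fun n => ⟪y n, w⟫) U (𝓝 r) := fun w =>
    U.exists_tendsto_of_isCompact isCompact_Icc <| hC.mono fun n hn => abs_le.mp <|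
      (abs_real_inner_le_norm _ _).trans (mul_le_mul_of_nonneg_right hn (norm_nonneg w))
  choose F hFC hF using hlim
  let Φ : H →ₗ[ℝ] ℝ :=
    { toFun := F
      map_add' := fun u v => tendsto_nhds_unique (hF _) <| by
        simpa [inner_add_right] using (hF u).add (hF v)
      map_smul' := fun r w => tendsto_nhds_unique (hF _) <| by
        simpa [real_inner_smul_right] using (hF w).const_mul r }
  refine ⟨(InnerProductSpace.toDual ℝ H).symm (Φ.mkContinuous C fun w => abs_le.mpr (hFC w)),
    fun w => ?_⟩
  rw [InnerProductSpace.toDual_symm_apply]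
  exact hF w

theorem TendstoWeakly.tendsto_of_mul_sq_norm_le_inner {l : Filter α} {y : α → H} {z u : H}
    {c : ℝ} (h : TendstoWeakly l y z) (hc : 0 < c)
    (hle : ∀ᶠ n in l, c * ‖y n - z‖ ^ 2 ≤ ⟪u, y n - z⟫) : Tendsto y l (𝓝 z) := by
  have hsq : Tendsto (fun n => ‖y n - z‖ ^ 2) l (𝓝 0) :=
    squeeze_zero' (Eventually.of_forall fun n => sq_nonneg _)
      (hle.mono fun n hn => (le_div_iff₀' hc).mpr hn)
      (by simpa using (h.tendsto_inner_sub u).div_const c)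
  rw [tendsto_iff_norm_sub_tendsto_zero]
  simpa [Real.sqrt_sq (norm_nonneg _)] using hsq.sqrt

theorem TendstoWeakly.isFixedPt_of_nonexpansiveOn {l : Filter α} [NeBot l] {y : α → H}
    {z : H} {T : H → H} {Q : Set H} {C : ℝ} (h : TendstoWeakly l y z)
    (hT : ∀ u ∈ Q, ∀ v ∈ Q, ‖T u - T v‖ ≤ ‖u - v‖) (hz : z ∈ Q) (hyQ : ∀ᶠ n in l, y n ∈ Q)
    (hC : ∀ᶠ n in l, ‖y n - z‖ ≤ C) (hy : Tendsto (fun n => ‖y n - T (y n)‖) l (𝓝 0)) :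
    IsFixedPt T z := by
  set e := fun n => ‖y n - T (y n)‖
  have hbound : ∀ᶠ n in l, ‖z - T z‖ ^ 2 ≤ e n * (2 * C + e n) - 2 * ⟪z - T z, y n - z⟫ := by
    filter_upwards [hyQ, hC] with n hn hnC
    have htri : ‖y n - T z‖ ≤ e n + ‖y n - z‖ :=
      calc ‖y n - T z‖ ≤ ‖y n - T (y n)‖ + ‖T (y n) - T z‖ :=
            norm_sub_le_norm_sub_add_norm_sub _ _ _
        _ ≤ e n + ‖y n - z‖ := by linarith [hT _ hn _ hz]
    have hexp : ‖y n - T z‖ ^ 2 = ‖y n - z‖ ^ 2 + 2 * ⟪z - T z, y n - z⟫ + ‖z - T z‖ ^ 2 := by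
      rw [show y n - T z = (y n - z) + (z - T z) by abel, norm_add_sq_real, real_inner_comm]
    have he : 0 ≤ e n := norm_nonneg _
    nlinarith [norm_nonneg (y n - z), norm_nonneg (y n - T z)]
  have hlim : Tendsto (fun n => e n * (2 * C + e n) - 2 * ⟪z - T z, y n - z⟫) l (𝓝 0) := by
    simpa using (hy.mul (hy.const_add (2 * C))).sub ((h.tendsto_inner_sub (z - T z)).const_mul 2)
  have hsq : ‖z - T z‖ ^ 2 ≤ 0 := ge_of_tendsto hlim hbound
  exact (norm_sub_eq_zero_iff.mp ((sq_nonpos_iff _).mp hsq)).symm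

end WeakConvergence

section Projection

variable {α H : Type*} [NormedAddCommGroup H] [InnerProductSpace ℝ H] {Q : Set H} {P : H → H}

def IsMetricProjection (Q : Set H) (P : H → H) : Prop :=
  ∀ x, P x ∈ Q ∧ ∀ y ∈ Q, ⟪x - P x, y - P x⟫ ≤ 0

theorem IsMetricProjection.eq_of_inner_le (hP : IsMetricProjection Q P) {w p : H} (hp : p ∈ Q)
    (h : ∀ y ∈ Q, ⟪w - p, y - p⟫ ≤ 0) : P w = p := by
  have h1 := (hP w).2 p hp
  have h2 := h (P w) (hP w).1
  have hsum : ⟪w - P w, p - P w⟫ + ⟪w - p, P w - p⟫ = ‖P w - p‖ ^ 2 := by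
    simp only [inner_sub_left, inner_sub_right, ← real_inner_self_eq_norm_sq]; ring
  exact norm_sub_eq_zero_iff.mp ((sq_nonpos_iff _).mp (by linarith))

theorem IsMetricProjection.norm_sq_add_norm_sq_le (hP : IsMetricProjection Q P) (u v : H) :
    ‖P u - P v‖ ^ 2 + ‖(u - P u) - (v - P v)‖ ^ 2 ≤ ‖u - v‖ ^ 2 := by
  have h1 := (hP u).2 (P v) (hP v).1
  have h2 := (hP v).2 (P u) (hP u).1
  have hsum : ‖u - v‖ ^ 2 - ‖P u - P v‖ ^ 2 - ‖(u - P u) - (v - P v)‖ ^ 2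
      = -2 * (⟪u - P u, P v - P u⟫ + ⟪v - P v, P u - P v⟫) := by
    simp only [← real_inner_self_eq_norm_sq, inner_sub_left, inner_sub_right, real_inner_comm]
    ring
  linarith

theorem IsMetricProjection.norm_sub_le (hP : IsMetricProjection Q P) (u v : H) :
    ‖P u - P v‖ ≤ ‖u - v‖ :=
  (sq_le_sq₀ (norm_nonneg _) (norm_nonneg _)).mp <|
    (le_add_of_nonneg_right (sq_nonneg _)).trans (hP.norm_sq_add_norm_sq_le u v)

theorem IsMetricProjection.mem_of_tendstoWeakly {l : Filter α} [NeBot l] {y : α → H} {z : H}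
    (hP : IsMetricProjection Q P) (hyQ : ∀ᶠ n in l, y n ∈ Q) (h : TendstoWeakly l y z) :
    z ∈ Q := by
  have hlim : Tendsto (fun n => ⟪z - P z, y n - P z⟫) l (𝓝 ⟪z - P z, z - P z⟫) := by
    have := (h.tendsto_inner_sub (z - P z)).add_const ⟪z - P z, z - P z⟫
    simpa only [← inner_add_right, sub_add_sub_cancel, zero_add] using this
  have hsq : ‖z - P z‖ ^ 2 ≤ 0 := by
    rw [← real_inner_self_eq_norm_sq]
    exact le_of_tendsto hlim (hyQ.mono fun n hn => (hP z).2 _ hn)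
  rw [norm_sub_eq_zero_iff.mp ((sq_nonpos_iff _).mp hsq)]
  exact (hP z).1

end Projection

section InverseStronglyMonotone

variable {H : Type*} [NormedAddCommGroup H] [InnerProductSpace ℝ H] {Q : Set H} {A : H → H}
  {ν : ℝ}

def IsInverseStronglyMonotoneOn (ν : ℝ) (A : H → H) (Q : Set H) : Prop :=
  ∀ x ∈ Q, ∀ y ∈ Q, ν * ‖A x - A y‖ ^ 2 ≤ ⟪A x - A y, x - y⟫

theorem IsInverseStronglyMonotoneOn.mul_norm_sub_le (hA : IsInverseStronglyMonotoneOn ν A Q)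
    {x y : H} (hx : x ∈ Q) (hy : y ∈ Q) : ν * ‖A x - A y‖ ≤ ‖x - y‖ := by
  rcases (norm_nonneg (A x - A y)).eq_or_lt with h0 | hpos
  · simp [← h0]
  · have := (hA x hx y hy).trans (real_inner_le_norm _ _)
    nlinarith

theorem IsInverseStronglyMonotoneOn.norm_sub_smul_sub_sq_le
    (hA : IsInverseStronglyMonotoneOn ν A Q) {l : ℝ} (hl : 0 ≤ l) {x y : H} (hx : x ∈ Q)
    (hy : y ∈ Q) :
    ‖(x - l • A x) - (y - l • A y)‖ ^ 2 ≤ ‖x - y‖ ^ 2 - l * (2 * ν - l) * ‖A x - A y‖ ^ 2 := by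
  rw [show (x - l • A x) - (y - l • A y) = (x - y) - l • (A x - A y) by module,
    norm_sub_sq_real, real_inner_smul_right, norm_smul, Real.norm_eq_abs, mul_pow, sq_abs,
    real_inner_comm]
  nlinarith [mul_le_mul_of_nonneg_left (hA x hx y hy) hl]

theorem IsInverseStronglyMonotoneOn.norm_sub_smul_sub_le
    (hA : IsInverseStronglyMonotoneOn ν A Q) {l : ℝ} (hl0 : 0 ≤ l) (hl : l ≤ 2 * ν) {x y : H}
    (hx : x ∈ Q) (hy : y ∈ Q) : ‖(x - l • A x) - (y - l • A y)‖ ≤ ‖x - y‖ :=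
  (sq_le_sq₀ (norm_nonneg _) (norm_nonneg _)).mp <| (hA.norm_sub_smul_sub_sq_le hl0 hx hy).trans <|
    sub_le_self _ (by have := sub_nonneg.mpr hl; positivity)

end InverseStronglyMonotone

section ProjectedGradient

variable {H : Type*} [NormedAddCommGroup H] [InnerProductSpace ℝ H] {Q : Set H} {P A S : H → H}
  {ν l : ℝ}

def projGradStep (P A : H → H) (l : ℝ) (w : H) : H := P (w - l • A w)

theorem projGradStep_eq_self_iff (hP : IsMetricProjection Q P) (hl : 0 < l) {q : H}
    (hq : q ∈ Q) : projGradStep P A l q = q ↔ ∀ y ∈ Q, 0 ≤ ⟪A q, y - q⟫ := by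
  have hinner : ∀ y, ⟪(q - l • A q) - q, y - q⟫ = -(l * ⟪A q, y - q⟫) := fun y => by
    rw [sub_sub_cancel_left, inner_neg_left, real_inner_smul_left]
  constructor
  · intro hfix y hy
    have := (hP (q - l • A q)).2 y hy
    rw [show P (q - l • A q) = q from hfix, hinner] at this
    nlinarith
  · intro hVI
    exact hP.eq_of_inner_le hq fun y hy => by rw [hinner]; nlinarith [hVI y hy]

theorem norm_projGradStep_sub_le (hP : IsMetricProjection Q P)
    (hA : IsInverseStronglyMonotoneOn ν A Q) (hl0 : 0 ≤ l) (hl : l ≤ 2 * ν) {x y : H}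
    (hx : x ∈ Q) (hy : y ∈ Q) : ‖projGradStep P A l x - projGradStep P A l y‖ ≤ ‖x - y‖ :=
  (hP.norm_sub_le _ _).trans (hA.norm_sub_smul_sub_le hl0 hl hx hy)

theorem norm_projGradStep_sub_projGradStep_le (hP : IsMetricProjection Q P) (l m : ℝ) (w : H) :
    ‖projGradStep P A l w - projGradStep P A m w‖ ≤ |l - m| * ‖A w‖ := by
  refine (hP.norm_sub_le _ _).trans_eq ?_
  rw [show (w - l • A w) - (w - m • A w) = (m - l) • A w by module, norm_smul, Real.norm_eq_abs,
    abs_sub_comm]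

theorem norm_comp_projGradStep_sub_le (hP : IsMetricProjection Q P)
    (hA : IsInverseStronglyMonotoneOn ν A Q) (hS : ∀ u ∈ Q, ∀ v ∈ Q, ‖S u - S v‖ ≤ ‖u - v‖)
    (hl0 : 0 ≤ l) (hl : l ≤ 2 * ν) {x q : H} (hx : x ∈ Q) (hq : q ∈ Q) (hSq : S q = q)
    (hGq : projGradStep P A l q = q) : ‖S (projGradStep P A l x) - q‖ ≤ ‖x - q‖ :=
  calc ‖S (projGradStep P A l x) - q‖
      = ‖S (projGradStep P A l x) - S (projGradStep P A l q)‖ := by rw [hGq, hSq]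
    _ ≤ ‖projGradStep P A l x - projGradStep P A l q‖ := hS _ (hP _).1 _ (hP _).1
    _ ≤ ‖x - q‖ := norm_projGradStep_sub_le hP hA hl0 hl hx hq

/-- With `G = projGradStep P A l`: comparing `‖z - q‖ ≤ ‖G z - q‖` with the firm nonexpansiveness
of `P` and the strict contraction of `I - l A` along `A z - A q` forces both defects to vanish. -/
theorem projGradStep_eq_self_of_comp_eq_self (hP : IsMetricProjection Q P)
    (hA : IsInverseStronglyMonotoneOn ν A Q) (hS : ∀ u ∈ Q, ∀ v ∈ Q, ‖S u - S v‖ ≤ ‖u - v‖)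
    (hl0 : 0 < l) (hl : l < 2 * ν) {q z : H} (hq : q ∈ Q) (hSq : S q = q)
    (hGq : projGradStep P A l q = q) (hz : z ∈ Q) (hSz : S (projGradStep P A l z) = z) :
    projGradStep P A l z = z := by
  have hfirm := hP.norm_sq_add_norm_sq_le (z - l • A z) (q - l • A q)
  have hgrad := hA.norm_sub_smul_sub_sq_le hl0.le hz hq
  change P (q - l • A q) = q at hGq
  change S (P (z - l • A z)) = z at hSz
  rw [hGq] at hfirm
  have hSle : ‖z - q‖ ≤ ‖P (z - l • A z) - q‖ :=
    calc ‖z - q‖ = ‖S (P (z - l • A z)) - S q‖ := by rw [hSz, hSq]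
      _ ≤ ‖P (z - l • A z) - q‖ := hS _ (hP _).1 _ hq
  have hsq := pow_le_pow_left₀ (norm_nonneg _) hSle 2
  have hc : 0 < l * (2 * ν - l) := mul_pos hl0 (by linarith)
  have hAz : A z = A q := norm_sub_eq_zero_iff.mp <| (sq_nonpos_iff _).mp <| by
    nlinarith [sq_nonneg ‖(z - l • A z - P (z - l • A z)) - (q - l • A q - q)‖]
  have hres : z - l • A z - P (z - l • A z) = q - l • A q - q :=
    norm_sub_eq_zero_iff.mp <| (sq_nonpos_iff _).mp <| by
      nlinarith [mul_nonneg hc.le (sq_nonneg ‖A z - A q‖)]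
  change P (z - l • A z) = z
  calc P (z - l • A z) = z - l • A z - (q - l • A q - q) := by rw [← hres]; abel
    _ = z := by rw [hAz]; abel

end ProjectedGradient

section PathInequalities

variable {H : Type*} [NormedAddCommGroup H] [InnerProductSpace ℝ H]

theorem sq_norm_sub_le_inner_of_eq_smul_add_smul {x v y q : H} {t : ℝ} (ht0 : 0 < t)
    (ht1 : t ≤ 1) (hx : x = t • v + (1 - t) • y) (hy : ‖y - q‖ ≤ ‖x - q‖) :
    ‖x - q‖ ^ 2 ≤ ⟪v - q, x - q⟫ := by
  have hsplit : ‖x - q‖ ^ 2 = t * ⟪v - q, x - q⟫ + (1 - t) * ⟪y - q, x - q⟫ := by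
    have hxq : x - q = t • (v - q) + (1 - t) • (y - q) := by rw [hx]; module
    rw [← real_inner_self_eq_norm_sq]
    nth_rewrite 1 [hxq]
    rw [inner_add_left, real_inner_smul_left, real_inner_smul_left]
  have hyx : ⟪y - q, x - q⟫ ≤ ‖x - q‖ ^ 2 :=
    (real_inner_le_norm _ _).trans (by rw [sq]; exact mul_le_mul_of_nonneg_right hy (norm_nonneg _))
  have : t * ‖x - q‖ ^ 2 ≤ t * ⟪v - q, x - q⟫ := by
    nlinarith [mul_le_mul_of_nonneg_left hyx (sub_nonneg.mpr ht1)]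
  exact le_of_mul_le_mul_left this ht0

theorem sub_mul_sq_norm_le_inner {x q v u : H} {ρ : ℝ} (h : ‖x - q‖ ^ 2 ≤ ⟪v - q, x - q⟫)
    (hv : ‖v - u‖ ≤ ρ * ‖x - q‖) : (1 - ρ) * ‖x - q‖ ^ 2 ≤ ⟪u - q, x - q⟫ := by
  have hsplit : ⟪v - q, x - q⟫ = ⟪v - u, x - q⟫ + ⟪u - q, x - q⟫ := by
    rw [← inner_add_left, sub_add_sub_cancel]
  nlinarith [real_inner_le_norm (v - u) (x - q),
    mul_le_mul_of_nonneg_right hv (norm_nonneg (x - q))]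

theorem inner_sub_sub_nonpos_of_sq_norm_le_inner {x q v : H} (h : ‖x - q‖ ^ 2 ≤ ⟪v - q, x - q⟫) :
    ⟪v - x, q - x⟫ ≤ 0 := by
  have : ⟪v - x, q - x⟫ = ‖x - q‖ ^ 2 - ⟪v - q, x - q⟫ := by
    simp only [← real_inner_self_eq_norm_sq, inner_sub_left, inner_sub_right, real_inner_comm]
    ring
  linarith

theorem norm_le_div_of_mul_sq_norm_le_inner {d u : H} {c : ℝ} (hc : 0 < c)
    (h : c * ‖d‖ ^ 2 ≤ ⟪u, d⟫) : ‖d‖ ≤ ‖u‖ / c := by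
  rw [le_div_iff₀' hc]
  rcases (norm_nonneg d).eq_or_lt with h0 | hpos
  · rw [← h0, mul_zero]; exact norm_nonneg u
  · nlinarith [real_inner_le_norm u d]

theorem eq_of_inner_sub_nonpos {f : H → H} {p q : H} {ρ : ℝ} (hρ : ρ < 1)
    (hf : ‖f p - f q‖ ≤ ρ * ‖p - q‖) (hp : ⟪f p - p, q - p⟫ ≤ 0) (hq : ⟪f q - q, p - q⟫ ≤ 0) :
    p = q := by
  have hsum : ⟪f p - p, q - p⟫ + ⟪f q - q, p - q⟫ = ‖p - q‖ ^ 2 - ⟪f p - f q, p - q⟫ := by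
    simp only [← real_inner_self_eq_norm_sq, inner_sub_left, inner_sub_right, real_inner_comm]
    ring
  have hle : ‖p - q‖ ^ 2 ≤ ρ * ‖p - q‖ ^ 2 := by
    nlinarith [real_inner_le_norm (f p - f q) (p - q),
      mul_le_mul_of_nonneg_right hf (norm_nonneg (p - q))]
  exact norm_sub_eq_zero_iff.mp <| (sq_nonpos_iff _).mp <| by nlinarith [sq_nonneg ‖p - q‖]

end PathInequalities

section ViscosityLimit

variable {α H : Type*} [NormedAddCommGroup H] [InnerProductSpace ℝ H]

theorem sq_norm_sub_le_inner_of_viscosity_eq {Q : Set H} {P A S f : H → H} {ν l t : ℝ}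
    {x q : H} (hP : IsMetricProjection Q P) (hA : IsInverseStronglyMonotoneOn ν A Q)
    (hS : ∀ u ∈ Q, ∀ v ∈ Q, ‖S u - S v‖ ≤ ‖u - v‖) (hl0 : 0 < l) (hl : l ≤ 2 * ν) (ht0 : 0 < t)
    (ht1 : t ≤ 1) (hxQ : x ∈ Q) (hx : x = t • f x + (1 - t) • S (projGradStep P A l x))
    (hq : q ∈ Q) (hSq : S q = q) (hVIq : ∀ y ∈ Q, 0 ≤ ⟪A q, y - q⟫) :
    ‖x - q‖ ^ 2 ≤ ⟪f x - q, x - q⟫ :=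
  sq_norm_sub_le_inner_of_eq_smul_add_smul ht0 ht1 hx <| norm_comp_projGradStep_sub_le hP hA hS
    hl0.le hl hxQ hq hSq ((projGradStep_eq_self_iff hP hl0 hq).2 hVIq)

theorem TendstoWeakly.tendsto_of_sq_norm_sub_le_inner {l : Filter α} [NeBot l] {x : α → H}
    {z : H} {Ω : Set H} {f : H → H} {ρ : ℝ} (h : TendstoWeakly l x z) (hz : z ∈ Ω) (hρ : ρ < 1)
    (hf : ∀ᶠ n in l, ‖f (x n) - f z‖ ≤ ρ * ‖x n - z‖)
    (hkey : ∀ᶠ n in l, ∀ q ∈ Ω, ‖x n - q‖ ^ 2 ≤ ⟪f (x n) - q, x n - q⟫) :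
    Tendsto x l (𝓝 z) ∧ ∀ y ∈ Ω, ⟪f z - z, y - z⟫ ≤ 0 := by
  have hx : Tendsto x l (𝓝 z) := h.tendsto_of_mul_sq_norm_le_inner (sub_pos.2 hρ)
    ((hkey.and hf).mono fun n hn => sub_mul_sq_norm_le_inner (hn.1 z hz) hn.2)
  have hfx : Tendsto (fun n => f (x n)) l (𝓝 (f z)) := by
    rw [tendsto_iff_norm_sub_tendsto_zero]
    exact squeeze_zero' (Eventually.of_forall fun n => norm_nonneg _) hf
      (by simpa using (tendsto_iff_norm_sub_tendsto_zero.mp hx).const_mul ρ)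
  exact ⟨hx, fun y hy => le_of_tendsto ((hfx.sub hx).inner (tendsto_const_nhds.sub hx))
    (hkey.mono fun n hn => inner_sub_sub_nonpos_of_sq_norm_le_inner (hn y hy))⟩

theorem tendsto_norm_sub_comp_projGradStep {l : Filter ℝ} {Q : Set H} {P A S : H → H}
    {x v : ℝ → H} {lam : ℝ → ℝ} {m C C' : ℝ} (hP : IsMetricProjection Q P)
    (hS : ∀ u ∈ Q, ∀ v ∈ Q, ‖S u - S v‖ ≤ ‖u - v‖) (ht : Tendsto id l (𝓝 0))
    (hlam : Tendsto lam l (𝓝 m))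
    (hx : ∀ᶠ t in l, x t = t • v t + (1 - t) • S (projGradStep P A (lam t) (x t)))
    (hv : ∀ᶠ t in l, ‖v t - S (projGradStep P A (lam t) (x t))‖ ≤ C)
    (hA : ∀ᶠ t in l, ‖A (x t)‖ ≤ C') :
    Tendsto (fun t => ‖x t - S (projGradStep P A m (x t))‖) l (𝓝 0) := by
  have hbound : ∀ᶠ t in l,
      ‖x t - S (projGradStep P A m (x t))‖ ≤ |t| * C + |lam t - m| * C' := by
    filter_upwards [hx, hv, hA] with t hxt hvt hAt
    set y := S (projGradStep P A (lam t) (x t))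
    have hxy : x t - y = t • (v t - y) := by rw [hxt]; module
    calc ‖x t - S (projGradStep P A m (x t))‖
        ≤ ‖x t - y‖ + ‖y - S (projGradStep P A m (x t))‖ := norm_sub_le_norm_sub_add_norm_sub _ _ _
      _ ≤ |t| * C + |lam t - m| * C' := by
        gcongr
        · rw [hxy, norm_smul, Real.norm_eq_abs]
          exact mul_le_mul_of_nonneg_left hvt (abs_nonneg t)
        · exact (hS _ (hP _).1 _ (hP _).1).trans <|
            (norm_projGradStep_sub_projGradStep_le hP _ _ _).trans
              (mul_le_mul_of_nonneg_left hAt (abs_nonneg _))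
  refine squeeze_zero' (Eventually.of_forall fun t => norm_nonneg _) hbound ?_
  simpa using (ht.abs.mul_const C).add ((hlam.sub_const m).abs.mul_const C')

theorem Ultrafilter.exists_tendstoWeakly_viscosityPath [CompleteSpace H] (U : Ultrafilter ℝ)
    (hU : (U : Filter ℝ) ≤ 𝓝[>] 0) {Q : Set H} {P A S f : H → H} {ν ρ a b R : ℝ}
    {lam : ℝ → ℝ} {x : ℝ → H} {q0 : H} (hP : IsMetricProjection Q P) (hν : 0 < ν)
    (hA : IsInverseStronglyMonotoneOn ν A Q) (hS : ∀ u ∈ Q, ∀ v ∈ Q, ‖S u - S v‖ ≤ ‖u - v‖)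
    (hρ : 0 ≤ ρ) (hf : ∀ u ∈ Q, ∀ v ∈ Q, ‖f u - f v‖ ≤ ρ * ‖u - v‖) (ha : 0 < a)
    (hb : b < 2 * ν) (hlam : ∀ t ∈ Ioc (0 : ℝ) 1, lam t ∈ Icc a b)
    (hxQ : ∀ t ∈ Ioc (0 : ℝ) 1, x t ∈ Q)
    (hx : ∀ t ∈ Ioc (0 : ℝ) 1,
      x t = t • f (x t) + (1 - t) • S (projGradStep P A (lam t) (x t)))
    (hq0 : q0 ∈ Q) (hSq0 : S q0 = q0) (hVIq0 : ∀ y ∈ Q, 0 ≤ ⟪A q0, y - q0⟫)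
    (hR : ∀ t ∈ Ioc (0 : ℝ) 1, ‖x t - q0‖ ≤ R) :
    ∃ z ∈ Q, S z = z ∧ (∀ y ∈ Q, 0 ≤ ⟪A z, y - z⟫) ∧ TendstoWeakly (U : Filter ℝ) x z := by
  have hev : ∀ᶠ t in (U : Filter ℝ), t ∈ Ioc (0 : ℝ) 1 := hU (Ioc_mem_nhdsGT one_pos)
  obtain ⟨m, ⟨ham, hmb⟩, hm⟩ := U.exists_tendsto_of_isCompact isCompact_Icc (hev.mono hlam)
  have hm0 : 0 < m := ha.trans_le ham
  have hm2 : m < 2 * ν := hmb.trans_lt hb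
  have hGq0 : ∀ l, 0 < l → projGradStep P A l q0 = q0 := fun l hl =>
    (projGradStep_eq_self_iff hP hl hq0).2 hVIq0
  obtain ⟨z, hz⟩ := U.exists_tendstoWeakly (y := x) (C := R + ‖q0‖) <| hev.mono fun t ht => by
    linarith [norm_sub_norm_le (x t) q0, hR t ht]
  have hzQ : z ∈ Q := hP.mem_of_tendstoWeakly (hev.mono hxQ) hz
  have hfix : Tendsto (fun t => ‖x t - S (projGradStep P A m (x t))‖) U (𝓝 0) := by
    refine tendsto_norm_sub_comp_projGradStep (C := ρ * R + ‖f q0 - q0‖ + R)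
      (C' := ‖A q0‖ + R / ν) hP hS (tendsto_id.mono_left (hU.trans nhdsWithin_le_nhds)) hm
      (hev.mono hx) (hev.mono fun t ht => ?_) (hev.mono fun t ht => ?_)
    · have hl := hlam t ht
      have hSG := norm_comp_projGradStep_sub_le hP hA hS (l := lam t) (by linarith [hl.1])
        (by linarith [hl.2]) (hxQ t ht) hq0 hSq0 (hGq0 _ (ha.trans_le hl.1))
      have hfx := (hf _ (hxQ t ht) _ hq0).trans (mul_le_mul_of_nonneg_left (hR t ht) hρ)
      linarith [norm_sub_le_norm_sub_add_norm_sub (f (x t)) q0 (S (projGradStep P A (lam t) (x t))),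
        norm_sub_le_norm_sub_add_norm_sub (f (x t)) (f q0) q0,
        norm_sub_rev q0 (S (projGradStep P A (lam t) (x t))), hR t ht]
    · have hAx : ‖A (x t) - A q0‖ ≤ R / ν := (le_div_iff₀' hν).2 <|
        (hA.mul_norm_sub_le (hxQ t ht) hq0).trans (hR t ht)
      linarith [norm_sub_norm_le (A (x t)) (A q0)]
  have hTz : S (projGradStep P A m z) = z :=
    hz.isFixedPt_of_nonexpansiveOn (T := fun w => S (projGradStep P A m w))
      (fun u hu v hv => (hS _ (hP _).1 _ (hP _).1).trans
        (norm_projGradStep_sub_le hP hA hm0.le hm2.le hu hv))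
      hzQ (hev.mono hxQ) (C := R + ‖q0 - z‖)
      (hev.mono fun t ht => by linarith [norm_sub_le_norm_sub_add_norm_sub (x t) q0 z, hR t ht])
      hfix
  have hGz := projGradStep_eq_self_of_comp_eq_self hP hA hS hm0 hm2 hq0 hSq0 (hGq0 m hm0) hzQ hTz
  exact ⟨z, hzQ, by rwa [hGz] at hTz, (projGradStep_eq_self_iff hP hm0 hzQ).1 hGz, hz⟩

end ViscosityLimit

theorem stmt_8_general {H : Type*} [NormedAddCommGroup H] [InnerProductSpace ℝ H] [CompleteSpace H]
    (Q : Set H)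
    (ν : ℝ) (hν : 0 < ν)
    (A : H → H) (hA : ∀ x ∈ Q, ∀ y ∈ Q, ν * ‖A x - A y‖ ^ 2 ≤ ⟪A x - A y, x - y⟫)
    (P : H → H) (hPmem : ∀ x, P x ∈ Q)
    (hP : ∀ (x : H), ∀ y ∈ Q, ⟪x - P x, y - P x⟫ ≤ 0)
    (S : H → H)
    (hS : ∀ x ∈ Q, ∀ y ∈ Q, ‖S x - S y‖ ≤ ‖x - y‖)
    (ρ : ℝ) (hρ : ρ ∈ Set.Ico (0 : ℝ) 1)
    (f : H → H)
    (hf : ∀ x ∈ Q, ∀ y ∈ Q, ‖f x - f y‖ ≤ ρ * ‖x - y‖)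
    (a b : ℝ) (hab : 0 < a ∧ a < b ∧ b < 2 * ν)
    (lam : ℝ → ℝ) (hlam : ∀ t ∈ Set.Ioc (0 : ℝ) 1, lam t ∈ Set.Icc a b)
    (Ω : Set H)
    (hΩ : Ω = {x : H | x ∈ Q ∧ S x = x} ∩ {q : H | q ∈ Q ∧ ∀ x ∈ Q, 0 ≤ ⟪A q, x - q⟫})
    (hΩne : Ω.Nonempty)
    (x : ℝ → H) (hxQ : ∀ t ∈ Set.Ioc (0 : ℝ) 1, x t ∈ Q)
    (hx : ∀ t ∈ Set.Ioc (0 : ℝ) 1,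
      x t = t • f (x t) + (1 - t) • S (P (x t - lam t • A (x t)))) :
    ∃ qstar : H,
      (qstar ∈ Ω ∧ ∀ y ∈ Ω, ⟪f qstar - qstar, y - qstar⟫ ≤ 0) ∧
      (∀ q : H, (q ∈ Ω ∧ ∀ y ∈ Ω, ⟪f q - q, y - q⟫ ≤ 0) → q = qstar) ∧
      Filter.Tendsto x (nhdsWithin 0 (Set.Ioi (0 : ℝ))) (nhds qstar) := by
  obtain ⟨ha, -, hb⟩ := hab
  have hPQ : IsMetricProjection Q P := fun x => ⟨hPmem x, hP x⟩
  have hΩmem := Set.ext_iff.mp hΩ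
  obtain ⟨q0, hq0Ω⟩ := hΩne
  obtain ⟨⟨hq0, hSq0⟩, -, hVIq0⟩ := (hΩmem q0).1 hq0Ω
  have hkey : ∀ t ∈ Ioc (0 : ℝ) 1, ∀ q ∈ Ω, ‖x t - q‖ ^ 2 ≤ ⟪f (x t) - q, x t - q⟫ := by
    intro t ht q hq
    obtain ⟨⟨hq, hSq⟩, -, hVIq⟩ := (hΩmem q).1 hq
    exact sq_norm_sub_le_inner_of_viscosity_eq hPQ hA hS (ha.trans_le (hlam t ht).1)
      (by linarith [(hlam t ht).2]) ht.1 ht.2 (hxQ t ht) (hx t ht) hq hSq hVIq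
  have hR : ∀ t ∈ Ioc (0 : ℝ) 1, ‖x t - q0‖ ≤ ‖f q0 - q0‖ / (1 - ρ) := fun t ht =>
    norm_le_div_of_mul_sq_norm_le_inner (sub_pos.2 hρ.2)
      (sub_mul_sq_norm_le_inner (hkey t ht q0 hq0Ω) (hf _ (hxQ t ht) _ hq0))
  have huniq : ∀ p q : H, (p ∈ Ω ∧ ∀ y ∈ Ω, ⟪f p - p, y - p⟫ ≤ 0) →
      (q ∈ Ω ∧ ∀ y ∈ Ω, ⟪f q - q, y - q⟫ ≤ 0) → p = q := fun p q hp hq =>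
    eq_of_inner_sub_nonpos hρ.2 (hf p ((hΩmem p).1 hp.1).1.1 q ((hΩmem q).1 hq.1).1.1)
      (hp.2 q hq.1) (hq.2 p hp.1)
  obtain ⟨q, hq, hconv⟩ := exists_tendsto_of_forall_ultrafilter (l := 𝓝[>] 0) (x := x) huniq
      fun U hU => by
    have hev : ∀ᶠ t in (U : Filter ℝ), t ∈ Ioc (0 : ℝ) 1 := hU (Ioc_mem_nhdsGT one_pos)
    obtain ⟨z, hzQ, hSz, hVIz, hz⟩ := U.exists_tendstoWeakly_viscosityPath hU hPQ hν hA hS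
      hρ.1 hf ha hb hlam hxQ hx hq0 hSq0 hVIq0 hR
    have hzΩ : z ∈ Ω := (hΩmem z).2 ⟨⟨hzQ, hSz⟩, hzQ, hVIz⟩
    obtain ⟨hconv, hVP⟩ := hz.tendsto_of_sq_norm_sub_le_inner hzΩ hρ.2
      (hev.mono fun t ht => hf _ (hxQ t ht) _ hzQ) (hev.mono hkey)
    exact ⟨z, ⟨hzΩ, hVP⟩, hconv⟩
  exact ⟨q, hq, fun p hp => huniq p q hp hq, hconv⟩

/-- The implicit path `x_t`, defined by
`x_t = t f(x_t) + (1-t) S(P_Q(x_t - λ(t) A x_t))`, converges strongly as `t → 0⁺`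
to `q*`, the unique solution of the variational problem (VP) on `Ω = Fix(S) ∩ S_VI(A,Q)`. -/
theorem stmt_8 {H : Type*} [NormedAddCommGroup H] [InnerProductSpace ℝ H] [CompleteSpace H]
    (Q : Set H) (hQne : Q.Nonempty) (hQclosed : IsClosed Q) (hQconvex : Convex ℝ Q)
    (ν : ℝ) (hν : 0 < ν)
    (A : H → H) (hA : ∀ x ∈ Q, ∀ y ∈ Q, ν * ‖A x - A y‖ ^ 2 ≤ ⟪A x - A y, x - y⟫)
    (P : H → H) (hPmem : ∀ x, P x ∈ Q)
    (hP : ∀ (x : H), ∀ y ∈ Q, ⟪x - P x, y - P x⟫ ≤ 0)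
    (S : H → H) (hSmem : ∀ x ∈ Q, S x ∈ Q)
    (hS : ∀ x ∈ Q, ∀ y ∈ Q, ‖S x - S y‖ ≤ ‖x - y‖)
    (ρ : ℝ) (hρ : ρ ∈ Set.Ico (0 : ℝ) 1)
    (f : H → H) (hfmem : ∀ x ∈ Q, f x ∈ Q)
    (hf : ∀ x ∈ Q, ∀ y ∈ Q, ‖f x - f y‖ ≤ ρ * ‖x - y‖)
    (a b : ℝ) (hab : 0 < a ∧ a < b ∧ b < 2 * ν)
    (lam : ℝ → ℝ) (hlam : ∀ t ∈ Set.Ioc (0 : ℝ) 1, lam t ∈ Set.Icc a b)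
    (Ω : Set H)
    (hΩ : Ω = {x : H | x ∈ Q ∧ S x = x} ∩ {q : H | q ∈ Q ∧ ∀ x ∈ Q, 0 ≤ ⟪A q, x - q⟫})
    (hΩne : Ω.Nonempty)
    (x : ℝ → H) (hxQ : ∀ t ∈ Set.Ioc (0 : ℝ) 1, x t ∈ Q)
    (hx : ∀ t ∈ Set.Ioc (0 : ℝ) 1,
      x t = t • f (x t) + (1 - t) • S (P (x t - lam t • A (x t)))) :
    ∃ qstar : H,
      (qstar ∈ Ω ∧ ∀ y ∈ Ω, ⟪f qstar - qstar, y - qstar⟫ ≤ 0) ∧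
      (∀ q : H, (q ∈ Ω ∧ ∀ y ∈ Ω, ⟪f q - q, y - q⟫ ≤ 0) → q = qstar) ∧
      Filter.Tendsto x (nhdsWithin 0 (Set.Ioi (0 : ℝ))) (nhds qstar) :=
  stmt_8_general Q ν hν A hA P hPmem hP S hS ρ hρ f hf a b hab lam hlam Ω hΩ hΩne x hxQ hx
end

section
/- Let H be a real Hilbert space, Q ⊆ H a nonempty closed convex set, ν > 0, A : Q → H a ν-inverse strongly monotone operator, S : Q → Q a nonexpansive mapping, f : Q → Q a contraction with coefficient ρ ∈ [0,1), 0 < a < b < 2ν, and λ : (0,1] → [a,b]. Assume Ω = Fix(S) ∩ S_VI(A,Q) is nonempty, and for each t ∈ (0,1] let x_t ∈ Q be the unique point with x_t = t·f(x_t) + (1 − t)·S(P_Q(x_t − λ(t)·A x_t)). Then for every q ∈ Ω, sup_{t ∈ (0,1]} ‖x_t − q‖ ≤ (1/(1 − ρ))·‖f(q) − q‖; in particular the family {x_t}_{t ∈ (0,1]} is bounded in H. -/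
/-!
Every `q ∈ Ω` is a fixed point of `S ∘ P ∘ (id - λ A)`: `S q = q`, and the variational inequality
makes `q` a fixed point of the projected gradient step. For `λ ∈ [0, 2ν]` that composite map is
nonexpansive at `q` (the projection is nonexpansive, and `id - λ A` is nonexpansive because `A` is
`ν`-inverse strongly monotone). Hence the implicit equation gives
`‖x_t - q‖ ≤ t (ρ ‖x_t - q‖ + ‖f q - q‖) + (1 - t) ‖x_t - q‖`, i.e.
`(1 - ρ) ‖x_t - q‖ ≤ ‖f q - q‖`.
-/

open scoped RealInnerProductSpace

section Projection

variable {H : Type*} [NormedAddCommGroup H] [InnerProductSpace ℝ H] {Q : Set H} {P : H → H}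

lemma sq_norm_proj_sub_le_inner (hPmem : ∀ x, P x ∈ Q)
    (hP : ∀ x, ∀ y ∈ Q, ⟪x - P x, y - P x⟫ ≤ 0) (u v : H) :
    ‖P u - P v‖ ^ 2 ≤ ⟪u - v, P u - P v⟫ := by
  have hu : ⟪u - P u, P v - P u⟫ ≤ 0 := hP u (P v) (hPmem v)
  have hv : ⟪v - P v, P u - P v⟫ ≤ 0 := hP v (P u) (hPmem u)
  have hu' : ⟪u - P u, P v - P u⟫ = -⟪u - P u, P u - P v⟫ := by
    rw [← inner_neg_right, neg_sub]
  have expand : ⟪u - v, P u - P v⟫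
      = ⟪u - P u, P u - P v⟫ - ⟪v - P v, P u - P v⟫ + ‖P u - P v‖ ^ 2 := by
    rw [← real_inner_self_eq_norm_sq]
    simp only [inner_sub_left]
    ring
  linarith

lemma norm_proj_sub_le (hPmem : ∀ x, P x ∈ Q)
    (hP : ∀ x, ∀ y ∈ Q, ⟪x - P x, y - P x⟫ ≤ 0) (u v : H) :
    ‖P u - P v‖ ≤ ‖u - v‖ := by
  rcases (norm_nonneg (P u - P v)).eq_or_lt with hzero | hpos
  · rw [← hzero]
    exact norm_nonneg _
  refine le_of_mul_le_mul_right ?_ hpos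
  calc ‖P u - P v‖ * ‖P u - P v‖ = ‖P u - P v‖ ^ 2 := (sq _).symm
    _ ≤ ⟪u - v, P u - P v⟫ := sq_norm_proj_sub_le_inner hPmem hP u v
    _ ≤ ‖u - v‖ * ‖P u - P v‖ := real_inner_le_norm _ _

lemma proj_sub_smul_eq_self {q g : H} {l : ℝ} (hPmem : ∀ x, P x ∈ Q)
    (hP : ∀ x, ∀ y ∈ Q, ⟪x - P x, y - P x⟫ ≤ 0) (hq : q ∈ Q)
    (hVI : ∀ y ∈ Q, 0 ≤ ⟪g, y - q⟫) (hl : 0 ≤ l) :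
    P (q - l • g) = q := by
  set p := P (q - l • g)
  have hproj : ⟪(q - l • g) - p, q - p⟫ ≤ 0 := hP _ q hq
  have hvi : 0 ≤ ⟪g, p - q⟫ := hVI p (hPmem _)
  have hvi' : ⟪g, q - p⟫ = -⟪g, p - q⟫ := by rw [← inner_neg_right, neg_sub]
  have expand : ‖q - p‖ ^ 2 = ⟪(q - l • g) - p, q - p⟫ + l * ⟪g, q - p⟫ := by
    rw [← real_inner_self_eq_norm_sq, sub_right_comm, inner_sub_left (q - p), real_inner_smul_left]
    ring
  have hsq : ‖q - p‖ ^ 2 ≤ 0 := by nlinarith [mul_nonneg hl hvi]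
  have hzero : ‖q - p‖ = 0 := pow_eq_zero_iff two_ne_zero |>.mp (le_antisymm hsq (sq_nonneg _))
  exact (sub_eq_zero.mp (norm_eq_zero.mp hzero)).symm

end Projection

lemma norm_sub_smul_le_of_inverse_strongly_monotone {H : Type*} [NormedAddCommGroup H]
    [InnerProductSpace ℝ H] {w d : H} {ν l : ℝ} (hism : ν * ‖d‖ ^ 2 ≤ ⟪d, w⟫)
    (hl0 : 0 ≤ l) (hl : l ≤ 2 * ν) :
    ‖w - l • d‖ ≤ ‖w‖ := by
  have expand : ‖w - l • d‖ ^ 2 = ‖w‖ ^ 2 - 2 * l * ⟪d, w⟫ + l ^ 2 * ‖d‖ ^ 2 := by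
    rw [norm_sub_sq_real, real_inner_smul_right, norm_smul, Real.norm_eq_abs, mul_pow, sq_abs,
      real_inner_comm]
    ring
  have hgap : 0 ≤ l * (2 * ν - l) * ‖d‖ ^ 2 :=
    mul_nonneg (mul_nonneg hl0 (by linarith)) (sq_nonneg _)
  refine (pow_le_pow_iff_left₀ (norm_nonneg _) (norm_nonneg _) two_ne_zero).mp ?_
  nlinarith [mul_le_mul_of_nonneg_left hism hl0]

lemma le_div_of_le_convex_comb {r c ρ t : ℝ} (ht : 0 < t) (hρ : ρ < 1)
    (h : r ≤ t * (ρ * r + c) + (1 - t) * r) :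
    r ≤ 1 / (1 - ρ) * c := by
  have key : (1 - ρ) * r ≤ c := le_of_mul_le_mul_left (by nlinarith) ht
  rw [one_div, ← div_eq_inv_mul, le_div_iff₀ (by linarith)]
  linarith

section ImplicitPath

variable {H : Type*} [NormedAddCommGroup H] [InnerProductSpace ℝ H] {Q : Set H}
  {A P S f : H → H} {ν ρ l t : ℝ} {q z : H}

lemma norm_proj_gradient_step_sub_le
    (hA : ∀ x ∈ Q, ∀ y ∈ Q, ν * ‖A x - A y‖ ^ 2 ≤ ⟪A x - A y, x - y⟫)
    (hPmem : ∀ x, P x ∈ Q) (hP : ∀ x, ∀ y ∈ Q, ⟪x - P x, y - P x⟫ ≤ 0)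
    (hS : ∀ x ∈ Q, ∀ y ∈ Q, ‖S x - S y‖ ≤ ‖x - y‖)
    (hq : q ∈ Q) (hSq : S q = q) (hVI : ∀ y ∈ Q, 0 ≤ ⟪A q, y - q⟫)
    (hz : z ∈ Q) (hl0 : 0 ≤ l) (hl : l ≤ 2 * ν) :
    ‖S (P (z - l • A z)) - q‖ ≤ ‖z - q‖ := by
  have hgrad : (z - l • A z) - (q - l • A q) = (z - q) - l • (A z - A q) := by
    rw [smul_sub]; abel
  calc ‖S (P (z - l • A z)) - q‖ = ‖S (P (z - l • A z)) - S (P (q - l • A q))‖ := by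
        rw [proj_sub_smul_eq_self hPmem hP hq hVI hl0, hSq]
    _ ≤ ‖P (z - l • A z) - P (q - l • A q)‖ := hS _ (hPmem _) _ (hPmem _)
    _ ≤ ‖(z - l • A z) - (q - l • A q)‖ := norm_proj_sub_le hPmem hP _ _
    _ ≤ ‖z - q‖ := hgrad ▸
        norm_sub_smul_le_of_inverse_strongly_monotone (hA z hz q hq) hl0 hl

lemma norm_sub_le_of_eq_implicit
    (hA : ∀ x ∈ Q, ∀ y ∈ Q, ν * ‖A x - A y‖ ^ 2 ≤ ⟪A x - A y, x - y⟫)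
    (hPmem : ∀ x, P x ∈ Q) (hP : ∀ x, ∀ y ∈ Q, ⟪x - P x, y - P x⟫ ≤ 0)
    (hS : ∀ x ∈ Q, ∀ y ∈ Q, ‖S x - S y‖ ≤ ‖x - y‖)
    (hf : ∀ x ∈ Q, ∀ y ∈ Q, ‖f x - f y‖ ≤ ρ * ‖x - y‖) (hρ : ρ < 1)
    (hq : q ∈ Q) (hSq : S q = q) (hVI : ∀ y ∈ Q, 0 ≤ ⟪A q, y - q⟫)
    (hl0 : 0 ≤ l) (hl : l ≤ 2 * ν) (ht0 : 0 < t) (ht1 : t ≤ 1)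
    (hz : z ∈ Q) (hzeq : z = t • f z + (1 - t) • S (P (z - l • A z))) :
    ‖z - q‖ ≤ 1 / (1 - ρ) * ‖f q - q‖ := by
  set y := S (P (z - l • A z))
  have hy : ‖y - q‖ ≤ ‖z - q‖ :=
    norm_proj_gradient_step_sub_le hA hPmem hP hS hq hSq hVI hz hl0 hl
  have hfz : ‖f z - q‖ ≤ ρ * ‖z - q‖ + ‖f q - q‖ := by
    linarith [norm_sub_le_norm_sub_add_norm_sub (f z) (f q) q, hf z hz q hq]
  have hdecomp : z - q = t • (f z - q) + (1 - t) • (y - q) := by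
    nth_rewrite 1 [hzeq]
    module
  refine le_div_of_le_convex_comb ht0 hρ ?_
  calc ‖z - q‖ ≤ ‖t • (f z - q)‖ + ‖(1 - t) • (y - q)‖ := hdecomp ▸ norm_add_le _ _
    _ = t * ‖f z - q‖ + (1 - t) * ‖y - q‖ := by
        rw [norm_smul, norm_smul, Real.norm_of_nonneg ht0.le,
          Real.norm_of_nonneg (sub_nonneg.mpr ht1)]
    _ ≤ t * (ρ * ‖z - q‖ + ‖f q - q‖) + (1 - t) * ‖z - q‖ := by
        gcongr

end ImplicitPath

theorem stmt_9_general {H : Type*} [NormedAddCommGroup H] [InnerProductSpace ℝ H]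
    (Q : Set H)
    (ν : ℝ)
    (A : H → H) (hA : ∀ x ∈ Q, ∀ y ∈ Q, ν * ‖A x - A y‖ ^ 2 ≤ ⟪A x - A y, x - y⟫)
    (P : H → H) (hPmem : ∀ x, P x ∈ Q)
    (hP : ∀ (x : H), ∀ y ∈ Q, ⟪x - P x, y - P x⟫ ≤ 0)
    (S : H → H)
    (hS : ∀ x ∈ Q, ∀ y ∈ Q, ‖S x - S y‖ ≤ ‖x - y‖)
    (ρ : ℝ) (hρ : ρ ∈ Set.Ico (0 : ℝ) 1)
    (f : H → H)
    (hf : ∀ x ∈ Q, ∀ y ∈ Q, ‖f x - f y‖ ≤ ρ * ‖x - y‖)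
    (a b : ℝ) (hab : 0 < a ∧ a < b ∧ b < 2 * ν)
    (lam : ℝ → ℝ) (hlam : ∀ t ∈ Set.Ioc (0 : ℝ) 1, lam t ∈ Set.Icc a b)
    (Ω : Set H)
    (hΩ : Ω = {x : H | x ∈ Q ∧ S x = x} ∩ {q : H | q ∈ Q ∧ ∀ x ∈ Q, 0 ≤ ⟪A q, x - q⟫})
    (hΩne : Ω.Nonempty)
    (x : ℝ → H) (hxQ : ∀ t ∈ Set.Ioc (0 : ℝ) 1, x t ∈ Q)
    (hx : ∀ t ∈ Set.Ioc (0 : ℝ) 1,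
      x t = t • f (x t) + (1 - t) • S (P (x t - lam t • A (x t)))) :
    (∀ q ∈ Ω, ∀ t ∈ Set.Ioc (0 : ℝ) 1, ‖x t - q‖ ≤ (1 / (1 - ρ)) * ‖f q - q‖) ∧
      ∃ M : ℝ, ∀ t ∈ Set.Ioc (0 : ℝ) 1, ‖x t‖ ≤ M := by
  have hbound : ∀ q ∈ Ω, ∀ t ∈ Set.Ioc (0 : ℝ) 1, ‖x t - q‖ ≤ 1 / (1 - ρ) * ‖f q - q‖ := by
    rintro q hqΩ t ht
    rw [hΩ] at hqΩ
    obtain ⟨⟨hq, hSq⟩, -, hVI⟩ := hqΩ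
    obtain ⟨hal, hlb⟩ := hlam t ht
    exact norm_sub_le_of_eq_implicit hA hPmem hP hS hf hρ.2 hq hSq hVI (by linarith)
      (by linarith) ht.1 ht.2 (hxQ t ht) (hx t ht)
  refine ⟨hbound, ?_⟩
  obtain ⟨q, hqΩ⟩ := hΩne
  refine ⟨‖q‖ + 1 / (1 - ρ) * ‖f q - q‖, fun t ht => ?_⟩
  linarith [norm_le_norm_add_norm_sub' (x t) q, hbound q hqΩ t ht]

/-- For the implicit path `x_t` and any `q ∈ Ω = Fix(S) ∩ S_VI(A,Q)`,
`sup_{t ∈ (0,1]} ‖x_t - q‖ ≤ ‖f(q) - q‖/(1 - ρ)`; in particular the family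
`{x_t}` is bounded. -/
theorem stmt_9 {H : Type*} [NormedAddCommGroup H] [InnerProductSpace ℝ H] [CompleteSpace H]
    (Q : Set H) (hQne : Q.Nonempty) (hQclosed : IsClosed Q) (hQconvex : Convex ℝ Q)
    (ν : ℝ) (hν : 0 < ν)
    (A : H → H) (hA : ∀ x ∈ Q, ∀ y ∈ Q, ν * ‖A x - A y‖ ^ 2 ≤ ⟪A x - A y, x - y⟫)
    (P : H → H) (hPmem : ∀ x, P x ∈ Q)
    (hP : ∀ (x : H), ∀ y ∈ Q, ⟪x - P x, y - P x⟫ ≤ 0)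
    (S : H → H) (hSmem : ∀ x ∈ Q, S x ∈ Q)
    (hS : ∀ x ∈ Q, ∀ y ∈ Q, ‖S x - S y‖ ≤ ‖x - y‖)
    (ρ : ℝ) (hρ : ρ ∈ Set.Ico (0 : ℝ) 1)
    (f : H → H) (hfmem : ∀ x ∈ Q, f x ∈ Q)
    (hf : ∀ x ∈ Q, ∀ y ∈ Q, ‖f x - f y‖ ≤ ρ * ‖x - y‖)
    (a b : ℝ) (hab : 0 < a ∧ a < b ∧ b < 2 * ν)
    (lam : ℝ → ℝ) (hlam : ∀ t ∈ Set.Ioc (0 : ℝ) 1, lam t ∈ Set.Icc a b)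
    (Ω : Set H)
    (hΩ : Ω = {x : H | x ∈ Q ∧ S x = x} ∩ {q : H | q ∈ Q ∧ ∀ x ∈ Q, 0 ≤ ⟪A q, x - q⟫})
    (hΩne : Ω.Nonempty)
    (x : ℝ → H) (hxQ : ∀ t ∈ Set.Ioc (0 : ℝ) 1, x t ∈ Q)
    (hx : ∀ t ∈ Set.Ioc (0 : ℝ) 1,
      x t = t • f (x t) + (1 - t) • S (P (x t - lam t • A (x t)))) :
    (∀ q ∈ Ω, ∀ t ∈ Set.Ioc (0 : ℝ) 1, ‖x t - q‖ ≤ (1 / (1 - ρ)) * ‖f q - q‖) ∧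
      ∃ M : ℝ, ∀ t ∈ Set.Ioc (0 : ℝ) 1, ‖x t‖ ≤ M :=
  stmt_9_general Q ν A hA P hPmem hP S hS ρ hρ f hf a b hab lam hlam Ω hΩ hΩne x hxQ hx
end
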